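/- arXiv:2504.11508 — 2 statements merged into one kernel-verified Lean document; each statement's English description precedes it below -/
import Mathlib

section
/- If in the canonicalization C₂ one chooses k₁ = k₄ and k₂ = k₃ (so E[φ(k₁)] = E[φ(k₄)] and E[φ(k₂)] = E[φ(k₃)] for every φ), then the residual shaping E[γ³φ(k₁) − γ³φ(k₄) + γ²φ(k₃) − γ²φ(k₂)] vanishes for any potential φ; hence C₂(R') = C₂(R) for any potentially shaped reward R' = R + γφ(s') − φ(s). -/
/-!
`C₂` is linear in the reward, so `C₂(R + γφ(s') - φ(s)) = C₂(R) + C₂(γφ(s') - φ(s))`.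
Applied to the pure shaping term, every potential value at `s`, `s'`, `S₁, …, S₄` cancels
(the constant part `φ(s) - γφ(s')` inside the expectation cancels the outer term because the
weights sum to one), leaving only the residual in `k₁, …, k₄`. Its two halves vanish because
`k₁, k₄` and `k₂, k₃` have the same expectations against every potential.
-/

open Finset

section WeightedSum

variable {Ω St : Type*} [Fintype Ω] (p : Ω → ℝ)

lemma sum_mul_sub_comp_eq_zero {k k' : Ω → St}
    (h : ∀ ψ : St → ℝ, ∑ ω, p ω * ψ (k ω) = ∑ ω, p ω * ψ (k' ω)) (ψ : St → ℝ) :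
    ∑ ω, p ω * (ψ (k ω) - ψ (k' ω)) = 0 := by
  simp only [mul_sub, sum_sub_distrib, h ψ, sub_self]

end WeightedSum

section Canonicalization

variable {St Ac Ω : Type*} [Fintype Ω] (p : Ω → ℝ) (γ : ℝ) (Av : Ω → Ac)
  (S1 S2 S3 S4 k1 k2 k3 k4 : Ω → St) (s : St) (a : Ac) (s' : St)

def canonC2 (Q : St → Ac → St → ℝ) : ℝ :=
  Q s a s' + ∑ ω, p ω *
    (γ * Q s' (Av ω) (S1 ω) - Q s (Av ω) (S2 ω) - γ * Q (S3 ω) (Av ω) (S4 ω)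
      + γ ^ 2 * Q (S1 ω) (Av ω) (k1 ω) - γ * Q (S2 ω) (Av ω) (k2 ω)
      + γ * Q (S3 ω) (Av ω) (k3 ω) - γ ^ 2 * Q (S4 ω) (Av ω) (k4 ω))

lemma canonC2_add (Q Q' : St → Ac → St → ℝ) :
    canonC2 p γ Av S1 S2 S3 S4 k1 k2 k3 k4 s a s' (fun u b w => Q u b w + Q' u b w) =
      canonC2 p γ Av S1 S2 S3 S4 k1 k2 k3 k4 s a s' Q +
        canonC2 p γ Av S1 S2 S3 S4 k1 k2 k3 k4 s a s' Q' := by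
  simp only [canonC2]
  rw [add_add_add_comm, ← sum_add_distrib]
  congr 1
  refine sum_congr rfl fun ω _ => ?_
  ring

lemma canonC2_potentialShaping (hp1 : ∑ ω, p ω = 1) (φ : St → ℝ) :
    canonC2 p γ Av S1 S2 S3 S4 k1 k2 k3 k4 s a s' (fun u _ w => γ * φ w - φ u) =
      ∑ ω, p ω *
        (γ ^ 3 * φ (k1 ω) - γ ^ 3 * φ (k4 ω) + γ ^ 2 * φ (k3 ω) - γ ^ 2 * φ (k2 ω)) := by
  have telescope : ∀ ω, p ω *
      (γ * (γ * φ (S1 ω) - φ s') - (γ * φ (S2 ω) - φ s) - γ * (γ * φ (S4 ω) - φ (S3 ω))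
        + γ ^ 2 * (γ * φ (k1 ω) - φ (S1 ω)) - γ * (γ * φ (k2 ω) - φ (S2 ω))
        + γ * (γ * φ (k3 ω) - φ (S3 ω)) - γ ^ 2 * (γ * φ (k4 ω) - φ (S4 ω))) =
      p ω * (φ s - γ * φ s') + p ω *
        (γ ^ 3 * φ (k1 ω) - γ ^ 3 * φ (k4 ω) + γ ^ 2 * φ (k3 ω) - γ ^ 2 * φ (k2 ω)) :=
    fun ω => by ring
  simp only [canonC2, telescope, sum_add_distrib, ← sum_mul, hp1]
  ring

lemma sum_mul_potentialResidual_eq_zero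
    (h14 : ∀ ψ : St → ℝ, ∑ ω, p ω * ψ (k1 ω) = ∑ ω, p ω * ψ (k4 ω))
    (h23 : ∀ ψ : St → ℝ, ∑ ω, p ω * ψ (k2 ω) = ∑ ω, p ω * ψ (k3 ω)) (φ : St → ℝ) :
    ∑ ω, p ω *
      (γ ^ 3 * φ (k1 ω) - γ ^ 3 * φ (k4 ω) + γ ^ 2 * φ (k3 ω) - γ ^ 2 * φ (k2 ω)) = 0 := by
  have h14' := sum_mul_sub_comp_eq_zero p h14 (fun x => γ ^ 3 * φ x)
  have h32' := sum_mul_sub_comp_eq_zero p (fun ψ => (h23 ψ).symm) (fun x => γ ^ 2 * φ x)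
  calc ∑ ω, p ω *
        (γ ^ 3 * φ (k1 ω) - γ ^ 3 * φ (k4 ω) + γ ^ 2 * φ (k3 ω) - γ ^ 2 * φ (k2 ω))
      = ∑ ω, p ω * (γ ^ 3 * φ (k1 ω) - γ ^ 3 * φ (k4 ω))
          + ∑ ω, p ω * (γ ^ 2 * φ (k3 ω) - γ ^ 2 * φ (k2 ω)) := by
        rw [← sum_add_distrib]
        exact sum_congr rfl fun ω _ => by ring
    _ = 0 := by rw [h14', h32', add_zero]

end Canonicalization

theorem stmt5_general {St Ac Ω : Type*} [Fintype Ω]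
    (R : St → Ac → St → ℝ) (φ : St → ℝ) (γ : ℝ)
    (p : Ω → ℝ) (hp1 : ∑ ω, p ω = 1)
    (Av : Ω → Ac) (S1 S2 S3 S4 k1 k2 k3 k4 : Ω → St)
    (h14 : ∀ ψ : St → ℝ, ∑ ω, p ω * ψ (k1 ω) = ∑ ω, p ω * ψ (k4 ω))
    (h23 : ∀ ψ : St → ℝ, ∑ ω, p ω * ψ (k2 ω) = ∑ ω, p ω * ψ (k3 ω))
    (s : St) (a : Ac) (s' : St) :
    let E := fun (f : Ω → ℝ) => ∑ ω, p ω * f ω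
    let C2 := fun (Q : St → Ac → St → ℝ) =>
      Q s a s' + E (fun ω =>
        γ * Q s' (Av ω) (S1 ω) - Q s (Av ω) (S2 ω) - γ * Q (S3 ω) (Av ω) (S4 ω)
        + γ ^ 2 * Q (S1 ω) (Av ω) (k1 ω) - γ * Q (S2 ω) (Av ω) (k2 ω)
        + γ * Q (S3 ω) (Av ω) (k3 ω) - γ ^ 2 * Q (S4 ω) (Av ω) (k4 ω))
    E (fun ω =>
        γ ^ 3 * φ (k1 ω) - γ ^ 3 * φ (k4 ω) + γ ^ 2 * φ (k3 ω) - γ ^ 2 * φ (k2 ω)) = 0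
    ∧ C2 (fun u b w => R u b w + γ * φ w - φ u) = C2 R := by
  have shaped_eq_add : (fun u b w => R u b w + γ * φ w - φ u) =
      fun u b w => R u b w + (fun u (_ : Ac) w => γ * φ w - φ u) u b w := by
    funext u b w
    ring
  have residual := sum_mul_potentialResidual_eq_zero p γ k1 k2 k3 k4 h14 h23 φ
  show _ = 0 ∧
    canonC2 p γ Av S1 S2 S3 S4 k1 k2 k3 k4 s a s' (fun u b w => R u b w + γ * φ w - φ u) =
      canonC2 p γ Av S1 S2 S3 S4 k1 k2 k3 k4 s a s' R
  refine ⟨residual, ?_⟩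
  rw [shaped_eq_add, canonC2_add, canonC2_potentialShaping (hp1 := hp1), residual, add_zero]

/-- If in `C₂` one chooses `k₁, k₄` identically distributed and `k₂, k₃`
identically distributed (so their potential expectations agree for every
potential), the residual shaping vanishes and `C₂(R') = C₂(R)` for any
potentially shaped reward `R'`. -/
theorem stmt5 {St Ac Ω : Type*} [Fintype Ω]
    (R : St → Ac → St → ℝ) (φ : St → ℝ) (γ : ℝ) (hγ0 : 0 ≤ γ) (hγ1 : γ ≤ 1)
    (p : Ω → ℝ) (hp0 : ∀ ω, 0 ≤ p ω) (hp1 : ∑ ω, p ω = 1)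
    (Av : Ω → Ac) (S1 S2 S3 S4 k1 k2 k3 k4 : Ω → St)
    (h14 : ∀ ψ : St → ℝ, ∑ ω, p ω * ψ (k1 ω) = ∑ ω, p ω * ψ (k4 ω))
    (h23 : ∀ ψ : St → ℝ, ∑ ω, p ω * ψ (k2 ω) = ∑ ω, p ω * ψ (k3 ω))
    (s : St) (a : Ac) (s' : St) :
    let E := fun (f : Ω → ℝ) => ∑ ω, p ω * f ω
    let C2 := fun (Q : St → Ac → St → ℝ) =>
      Q s a s' + E (fun ω =>
        γ * Q s' (Av ω) (S1 ω) - Q s (Av ω) (S2 ω) - γ * Q (S3 ω) (Av ω) (S4 ω)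
        + γ ^ 2 * Q (S1 ω) (Av ω) (k1 ω) - γ * Q (S2 ω) (Av ω) (k2 ω)
        + γ * Q (S3 ω) (Av ω) (k3 ω) - γ ^ 2 * Q (S4 ω) (Av ω) (k4 ω))
    E (fun ω =>
        γ ^ 3 * φ (k1 ω) - γ ^ 3 * φ (k4 ω) + γ ^ 2 * φ (k3 ω) - γ ^ 2 * φ (k2 ω)) = 0
    ∧ C2 (fun u b w => R u b w + γ * φ w - φ u) = C2 R :=
  stmt5_general R φ γ p hp1 Av S1 S2 S3 S4 k1 k2 k3 k4 h14 h23 s a s'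
end

section
/- The sample-based SRRD approximation Ĉ_SRRD, defined with empirical averages over finite sets X₁,…,X₆ of state-action pairs replacing the expectations in C_SRRD, is invariant to potential shaping: for R'(s,a,s') = R(s,a,s') + γφ(s') − φ(s), Ĉ_SRRD(R')(s,a,s') = Ĉ_SRRD(R)(s,a,s'), provided all rewards appearing in the cross-product sums are defined. -/
/-!
`Ĉ_SRRD` is linear in the reward, so it suffices that it vanishes on a pure shaping term
`γ φ(w) - φ(u)`. Each normalized sum in `Ĉ_SRRD` is an empirical mean, and on a shaping term these
means only involve `φ(s)`, `φ(s')` and the empirical means `m_i` of `φ` over the states of `X_i`;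
every one of these quantities then occurs twice with opposite signs.
-/

open Finset
open scoped BigOperators

section EmpiricalMean

variable {ι κ : Type*}

theorem div_card_mul_sum (c : ℝ) (X : Finset ι) (f : ι → ℝ) :
    c / #X * ∑ i ∈ X, f i = c * 𝔼 i ∈ X, f i := by
  rw [expect_eq_sum_div_card]
  ring

theorem div_card_mul_card_mul_sum_sum (c : ℝ) (X : Finset ι) (Y : Finset κ) (f : ι → κ → ℝ) :
    c / (#X * #Y) * ∑ i ∈ X, ∑ j ∈ Y, f i j = c * 𝔼 i ∈ X, 𝔼 j ∈ Y, f i j := by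
  simp only [expect_eq_sum_div_card, ← sum_div]
  ring

end EmpiricalMean

section Srrd

variable {St Ac : Type*}

/-- `Ĉ_SRRD(Q)(s, a, s')`. -/
noncomputable def srrdHat (γ : ℝ) (X1 X2 X3 X4 X5 X6 : Finset (St × Ac)) (s : St) (a : Ac)
    (s' : St) (Q : St → Ac → St → ℝ) : ℝ :=
  Q s a s'
    + (γ / #X1) * ∑ q ∈ X1, Q s' q.2 q.1
    - (1 / #X2) * ∑ q ∈ X2, Q s q.2 q.1
    - (γ / (#X3 * #X4)) * ∑ q ∈ X3, ∑ r ∈ X4, Q q.1 q.2 r.1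
    + (γ ^ 2 / (#X1 * #X5)) * ∑ q ∈ X1, ∑ r ∈ X5, Q q.1 q.2 r.1
    - (γ / (#X2 * #X6)) * ∑ q ∈ X2, ∑ r ∈ X6, Q q.1 q.2 r.1
    + (γ / (#X3 * #X6)) * ∑ q ∈ X3, ∑ r ∈ X6, Q q.1 q.2 r.1
    - (γ ^ 2 / (#X4 * #X5)) * ∑ q ∈ X4, ∑ r ∈ X5, Q q.1 q.2 r.1

def potentialShaping (γ : ℝ) (φ : St → ℝ) : St → Ac → St → ℝ := fun u _ w => γ * φ w - φ u

theorem srrdHat_add (γ : ℝ) (X1 X2 X3 X4 X5 X6 : Finset (St × Ac)) (s : St) (a : Ac) (s' : St)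
    (Q₁ Q₂ : St → Ac → St → ℝ) :
    srrdHat γ X1 X2 X3 X4 X5 X6 s a s' (Q₁ + Q₂) =
      srrdHat γ X1 X2 X3 X4 X5 X6 s a s' Q₁ + srrdHat γ X1 X2 X3 X4 X5 X6 s a s' Q₂ := by
  simp only [srrdHat, Pi.add_apply, sum_add_distrib]
  ring

theorem srrdHat_eq_expect (γ : ℝ) (X1 X2 X3 X4 X5 X6 : Finset (St × Ac)) (s : St) (a : Ac)
    (s' : St) (Q : St → Ac → St → ℝ) :
    srrdHat γ X1 X2 X3 X4 X5 X6 s a s' Q =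
      Q s a s'
        + γ * 𝔼 q ∈ X1, Q s' q.2 q.1
        - 𝔼 q ∈ X2, Q s q.2 q.1
        - γ * 𝔼 q ∈ X3, 𝔼 r ∈ X4, Q q.1 q.2 r.1
        + γ ^ 2 * 𝔼 q ∈ X1, 𝔼 r ∈ X5, Q q.1 q.2 r.1
        - γ * 𝔼 q ∈ X2, 𝔼 r ∈ X6, Q q.1 q.2 r.1
        + γ * 𝔼 q ∈ X3, 𝔼 r ∈ X6, Q q.1 q.2 r.1
        - γ ^ 2 * 𝔼 q ∈ X4, 𝔼 r ∈ X5, Q q.1 q.2 r.1 := by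
  simp only [srrdHat, div_card_mul_sum, div_card_mul_card_mul_sum_sum, one_mul]

theorem expect_potentialShaping_from (γ : ℝ) (φ : St → ℝ) {X : Finset (St × Ac)}
    (hX : X.Nonempty) (u : St) :
    𝔼 q ∈ X, potentialShaping γ φ u q.2 q.1 = γ * 𝔼 q ∈ X, φ q.1 - φ u := by
  simp only [potentialShaping, expect_sub_distrib, expect_const hX, ← mul_expect]

theorem expect_expect_potentialShaping (γ : ℝ) (φ : St → ℝ) {X Y : Finset (St × Ac)}
    (hX : X.Nonempty) (hY : Y.Nonempty) :
    𝔼 q ∈ X, 𝔼 r ∈ Y, potentialShaping γ φ q.1 q.2 r.1 = γ * 𝔼 r ∈ Y, φ r.1 - 𝔼 q ∈ X, φ q.1 := by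
  simp only [potentialShaping, expect_sub_distrib, expect_const hY, ← mul_expect,
    expect_const hX]

theorem srrdHat_potentialShaping (γ : ℝ) (φ : St → ℝ) {X1 X2 X3 X4 X5 X6 : Finset (St × Ac)}
    (h1 : X1.Nonempty) (h2 : X2.Nonempty) (h3 : X3.Nonempty) (h4 : X4.Nonempty)
    (h5 : X5.Nonempty) (h6 : X6.Nonempty) (s : St) (a : Ac) (s' : St) :
    srrdHat γ X1 X2 X3 X4 X5 X6 s a s' (potentialShaping γ φ) = 0 := by
  simp only [srrdHat_eq_expect, expect_potentialShaping_from γ φ h1,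
    expect_potentialShaping_from γ φ h2, expect_expect_potentialShaping γ φ h3 h4,
    expect_expect_potentialShaping γ φ h1 h5, expect_expect_potentialShaping γ φ h2 h6,
    expect_expect_potentialShaping γ φ h3 h6, expect_expect_potentialShaping γ φ h4 h5]
  simp only [potentialShaping]
  ring

end Srrd

theorem stmt7_general {St Ac : Type*}
    (R : St → Ac → St → ℝ) (φ : St → ℝ) (γ : ℝ)
    (X1 X2 X3 X4 X5 X6 : Finset (St × Ac))
    (h1 : X1.Nonempty) (h2 : X2.Nonempty) (h3 : X3.Nonempty)
    (h4 : X4.Nonempty) (h5 : X5.Nonempty) (h6 : X6.Nonempty)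
    (s : St) (a : Ac) (s' : St) :
    let N := fun (X : Finset (St × Ac)) => (X.card : ℝ)
    let Chat := fun (Q : St → Ac → St → ℝ) =>
      Q s a s'
      + (γ / N X1) * ∑ q ∈ X1, Q s' q.2 q.1
      - (1 / N X2) * ∑ q ∈ X2, Q s q.2 q.1
      - (γ / (N X3 * N X4)) * ∑ q ∈ X3, ∑ r ∈ X4, Q q.1 q.2 r.1
      + (γ ^ 2 / (N X1 * N X5)) * ∑ q ∈ X1, ∑ r ∈ X5, Q q.1 q.2 r.1
      - (γ / (N X2 * N X6)) * ∑ q ∈ X2, ∑ r ∈ X6, Q q.1 q.2 r.1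
      + (γ / (N X3 * N X6)) * ∑ q ∈ X3, ∑ r ∈ X6, Q q.1 q.2 r.1
      - (γ ^ 2 / (N X4 * N X5)) * ∑ q ∈ X4, ∑ r ∈ X5, Q q.1 q.2 r.1
    Chat (fun u b w => R u b w + γ * φ w - φ u) = Chat R := by
  intro N Chat
  have hshaped : (fun u b w => R u b w + γ * φ w - φ u) = R + potentialShaping γ φ := by
    funext u b w
    simp only [Pi.add_apply, potentialShaping]
    ring
  show srrdHat γ X1 X2 X3 X4 X5 X6 s a s' (fun u b w => R u b w + γ * φ w - φ u) =
    srrdHat γ X1 X2 X3 X4 X5 X6 s a s' R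
  rw [hshaped, srrdHat_add, srrdHat_potentialShaping γ φ h1 h2 h3 h4 h5 h6, add_zero]

/-- The sample-based SRRD approximation, built from empirical averages over
finite nonempty sets `X₁, …, X₆` of state-action pairs, is invariant to
potential shaping. -/
theorem stmt7 {St Ac : Type*}
    (R : St → Ac → St → ℝ) (φ : St → ℝ) (γ : ℝ) (hγ0 : 0 ≤ γ) (hγ1 : γ ≤ 1)
    (X1 X2 X3 X4 X5 X6 : Finset (St × Ac))
    (h1 : X1.Nonempty) (h2 : X2.Nonempty) (h3 : X3.Nonempty)
    (h4 : X4.Nonempty) (h5 : X5.Nonempty) (h6 : X6.Nonempty)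
    (s : St) (a : Ac) (s' : St) :
    let N := fun (X : Finset (St × Ac)) => (X.card : ℝ)
    let Chat := fun (Q : St → Ac → St → ℝ) =>
      Q s a s'
      + (γ / N X1) * ∑ q ∈ X1, Q s' q.2 q.1
      - (1 / N X2) * ∑ q ∈ X2, Q s q.2 q.1
      - (γ / (N X3 * N X4)) * ∑ q ∈ X3, ∑ r ∈ X4, Q q.1 q.2 r.1
      + (γ ^ 2 / (N X1 * N X5)) * ∑ q ∈ X1, ∑ r ∈ X5, Q q.1 q.2 r.1
      - (γ / (N X2 * N X6)) * ∑ q ∈ X2, ∑ r ∈ X6, Q q.1 q.2 r.1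
      + (γ / (N X3 * N X6)) * ∑ q ∈ X3, ∑ r ∈ X6, Q q.1 q.2 r.1
      - (γ ^ 2 / (N X4 * N X5)) * ∑ q ∈ X4, ∑ r ∈ X5, Q q.1 q.2 r.1
    Chat (fun u b w => R u b w + γ * φ w - φ u) = Chat R :=
  stmt7_general R φ γ X1 X2 X3 X4 X5 X6 h1 h2 h3 h4 h5 h6 s a s'
end
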